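/- Let n ≥ 2 and 1 ≤ k ≤ n−1, and let U ∈ U(n) be a unitary matrix written in block form U = [[X, Y], [Z, V]] with X ∈ ℂ^{(n−k)×k}, Y ∈ ℂ^{(n−k)×(n−k)}, Z ∈ ℂ^{k×k}, V ∈ ℂ^{k×(n−k)}. If Z is invertible, then Y is invertible and tr((Z Zᴴ)⁻¹) − k = tr((Y Yᴴ)⁻¹) − (n−k). -/

import Mathlib

open Matrix

/-!
Unitarity gives `Zᴴ Z = 1 - Xᴴ X` and `Y Yᴴ = 1 - X Xᴴ`, and `1 - Xᴴ X`, `1 - X Xᴴ` have the same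
determinant, so `Y` is invertible with `Z`. For the traces, the push-through identity
`(1 - B A)⁻¹ B = B (1 - A B)⁻¹` gives `tr (1 - B A)⁻¹ - #n = tr ((1 - B A)⁻¹ B A) = tr ((1 - A B)⁻¹ A B)
= tr (1 - A B)⁻¹ - #m`, applied with `A = X`, `B = Xᴴ`.
-/

namespace Matrix

section Unitary

variable {m n R : Type*} [Fintype m] [Fintype n] [DecidableEq m] [DecidableEq n]
  [Ring R] [StarRing R]

theorem conjTranspose_mul_self_add_eq_one_of_fromBlocks
    {A : Matrix m n R} {B : Matrix m m R} {C : Matrix n n R} {D : Matrix n m R}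
    (h : (fromBlocks A B C D)ᴴ * fromBlocks A B C D = 1) : Aᴴ * A + Cᴴ * C = 1 := by
  simpa [fromBlocks_conjTranspose, fromBlocks_multiply, ← fromBlocks_one]
    using congrArg toBlocks₁₁ h

theorem mul_conjTranspose_self_add_eq_one_of_fromBlocks
    {A : Matrix m n R} {B : Matrix m m R} {C : Matrix n n R} {D : Matrix n m R}
    (h : fromBlocks A B C D * (fromBlocks A B C D)ᴴ = 1) : A * Aᴴ + B * Bᴴ = 1 := by
  simpa [fromBlocks_conjTranspose, fromBlocks_multiply, ← fromBlocks_one]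
    using congrArg toBlocks₁₁ h

end Unitary

section PushThrough

variable {m n R : Type*} [Fintype m] [Fintype n] [DecidableEq m] [DecidableEq n] [CommRing R]

theorem trace_inv_mul_comm (A B : Matrix n n R) : trace (A * B)⁻¹ = trace (B * A)⁻¹ := by
  rw [mul_inv_rev, mul_inv_rev, trace_mul_comm]

theorem inv_one_sub_mul_self {M : Matrix n n R} (h : IsUnit (1 - M).det) :
    (1 - M)⁻¹ * M = (1 - M)⁻¹ - 1 := by
  have hinv := nonsing_inv_mul _ h
  rw [Matrix.mul_sub, Matrix.mul_one, sub_eq_iff_eq_add] at hinv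
  exact eq_sub_of_add_eq' hinv.symm

theorem inv_one_sub_mul_mul (A : Matrix m n R) (B : Matrix n m R)
    (h : IsUnit (1 - B * A).det) : (1 - B * A)⁻¹ * B = B * (1 - A * B)⁻¹ := by
  have h' : IsUnit (1 - A * B).det := by rwa [det_one_sub_mul_comm]
  have hcomm : (1 - B * A) * B = B * (1 - A * B) := by
    simp only [Matrix.sub_mul, Matrix.mul_sub, Matrix.one_mul, Matrix.mul_one, Matrix.mul_assoc]
  calc (1 - B * A)⁻¹ * B = (1 - B * A)⁻¹ * ((1 - B * A) * B) * (1 - A * B)⁻¹ := by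
        rw [hcomm, Matrix.mul_assoc, Matrix.mul_assoc B, mul_nonsing_inv _ h', Matrix.mul_one]
    _ = B * (1 - A * B)⁻¹ := by
        rw [← Matrix.mul_assoc, nonsing_inv_mul _ h, Matrix.one_mul]

theorem trace_inv_one_sub_mul_comm (A : Matrix m n R) (B : Matrix n m R)
    (h : IsUnit (1 - B * A).det) :
    trace (1 - B * A)⁻¹ - (Fintype.card n : R) = trace (1 - A * B)⁻¹ - (Fintype.card m : R) := by
  have h' : IsUnit (1 - A * B).det := by rwa [det_one_sub_mul_comm]
  calc trace (1 - B * A)⁻¹ - (Fintype.card n : R) = trace ((1 - B * A)⁻¹ * B * A) := by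
        rw [Matrix.mul_assoc, inv_one_sub_mul_self h, trace_sub, trace_one]
    _ = trace ((1 - A * B)⁻¹ * (A * B)) := by
        rw [inv_one_sub_mul_mul A B h, trace_mul_comm, ← Matrix.mul_assoc, trace_mul_comm]
    _ = trace (1 - A * B)⁻¹ - (Fintype.card m : R) := by
        rw [inv_one_sub_mul_self h', trace_sub, trace_one]

end PushThrough

end Matrix

theorem trace_inv_self_mul_conjTranspose_of_unitary_blocks_general
    (n k : ℕ)
    (X : Matrix (Fin (n - k)) (Fin k) ℂ) (Y : Matrix (Fin (n - k)) (Fin (n - k)) ℂ)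
    (Z : Matrix (Fin k) (Fin k) ℂ) (V : Matrix (Fin k) (Fin (n - k)) ℂ)
    (hU₁ : (Matrix.fromBlocks X Y Z V)ᴴ * Matrix.fromBlocks X Y Z V = 1)
    (hU₂ : Matrix.fromBlocks X Y Z V * (Matrix.fromBlocks X Y Z V)ᴴ = 1)
    (hZ : IsUnit Z.det) :
    IsUnit Y.det ∧
      ((Z * Zᴴ)⁻¹).trace - (k : ℂ) = ((Y * Yᴴ)⁻¹).trace - ((n - k : ℕ) : ℂ) := by
  have hZZ : Zᴴ * Z = 1 - Xᴴ * X :=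
    eq_sub_of_add_eq' (conjTranspose_mul_self_add_eq_one_of_fromBlocks hU₁)
  have hYY : Y * Yᴴ = 1 - X * Xᴴ :=
    eq_sub_of_add_eq' (mul_conjTranspose_self_add_eq_one_of_fromBlocks hU₂)
  have hdet : IsUnit (1 - Xᴴ * X).det := by
    rw [← hZZ, det_mul, det_conjTranspose]
    exact hZ.star.mul hZ
  refine ⟨?_, ?_⟩
  · have hdetYY : IsUnit (Y.det * Yᴴ.det) := by
      rwa [← det_mul, hYY, det_one_sub_mul_comm]
    exact isUnit_of_mul_isUnit_left hdetYY
  · rw [trace_inv_mul_comm, hZZ, hYY]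
    simpa only [Fintype.card_fin] using trace_inv_one_sub_mul_comm X Xᴴ hdet

/-- For a block-decomposed unitary matrix `U = [[X, Y], [Z, V]]` with `Z` invertible, `Y` is
invertible and `tr((Z Zᴴ)⁻¹) − k = tr((Y Yᴴ)⁻¹) − (n − k)`. -/
theorem trace_inv_self_mul_conjTranspose_of_unitary_blocks
    (n k : ℕ) (hn : 2 ≤ n) (hk1 : 1 ≤ k) (hk2 : k ≤ n - 1)
    (X : Matrix (Fin (n - k)) (Fin k) ℂ) (Y : Matrix (Fin (n - k)) (Fin (n - k)) ℂ)
    (Z : Matrix (Fin k) (Fin k) ℂ) (V : Matrix (Fin k) (Fin (n - k)) ℂ)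
    (hU₁ : (Matrix.fromBlocks X Y Z V)ᴴ * Matrix.fromBlocks X Y Z V = 1)
    (hU₂ : Matrix.fromBlocks X Y Z V * (Matrix.fromBlocks X Y Z V)ᴴ = 1)
    (hZ : IsUnit Z.det) :
    IsUnit Y.det ∧
      ((Z * Zᴴ)⁻¹).trace - (k : ℂ) = ((Y * Yᴴ)⁻¹).trace - ((n - k : ℕ) : ℂ) :=
  trace_inv_self_mul_conjTranspose_of_unitary_blocks_general n k X Y Z V hU₁ hU₂ hZ
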